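/- (Theorem 1, asymptotic form) Let σ > 0, let p be an even positive integer, let k be an even nonnegative integer, and let N be a nonnegative integer. Then, as ε → 0 from the right, ∫_ℝ p_G(x) x^k exp(−ε x^p) dx − Σ_{n=0}^{N} ((−ε)^n / n!) (np+k−1)!! σ^{np+k} = O(ε^{N+1}). That is, the series Σ_n ((−ε)^n/n!) (np+k−1)!! σ^{np+k} is an asymptotic expansion of μ_k / C(ε) as ε → 0⁺. -/

import Mathlib

/-!
As `p` is even, `t = ε x ^ p ≥ 0`, and for `t ≥ 0` the degree-`N` Taylor polynomial of `exp (-t)`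
is within `t ^ (N + 1) / (N + 1)!` of it. Multiplying by `pG σ x * x ^ k ≥ 0` and integrating
termwise bounds the error by `ε ^ (N + 1) / (N + 1)!` times a Gaussian moment. The even Gaussian
moments `(2m - 1)‼ σ ^ (2m)` come from the recursion given by integration by parts.
-/

open MeasureTheory Real Filter Topology Asymptotics

noncomputable def pG (σ x : ℝ) : ℝ :=
  (1 / (Real.sqrt (2 * Real.pi) * σ)) * Real.exp (-x ^ 2 / (2 * σ ^ 2))

open Finset
open scoped Nat

lemma hasDerivAt_sum_range_neg_pow_div_factorial (n : ℕ) (t : ℝ) :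
    HasDerivAt (fun t : ℝ => ∑ m ∈ range (n + 1), (-t) ^ m / m.factorial)
      (-∑ m ∈ range n, (-t) ^ m / m.factorial) t := by
  have hterm : ∀ m ∈ range (n + 1), HasDerivAt (fun t : ℝ => (-t) ^ m / m.factorial)
      (m * (-t) ^ (m - 1) * (-1) / m.factorial) t :=
    fun m _ => (((hasDerivAt_id t).neg).pow m).div_const _ |>.congr_deriv (by simp)
  refine (HasDerivAt.fun_sum hterm).congr_deriv ?_
  rw [sum_range_succ', ← sum_neg_distrib]
  simp only [CharP.cast_eq_zero, zero_mul, zero_div, add_zero, Nat.add_sub_cancel,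
    Nat.factorial_succ, Nat.cast_mul]
  refine sum_congr rfl fun m _ => ?_
  field_simp

theorem abs_exp_neg_sub_sum_range_le (n : ℕ) {t : ℝ} (ht : 0 ≤ t) :
    |exp (-t) - ∑ m ∈ range n, (-t) ^ m / m.factorial| ≤ t ^ n / n.factorial := by
  induction n generalizing t with
  | zero => simpa using exp_le_one_iff.mpr (neg_nonpos.mpr ht)
  | succ n ih =>
    have hf : ∀ s, HasDerivAt
        (fun s : ℝ => exp (-s) - ∑ m ∈ range (n + 1), (-s) ^ m / m.factorial)
        (-(exp (-s) - ∑ m ∈ range n, (-s) ^ m / m.factorial)) s := fun s =>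
      ((hasDerivAt_neg s).exp.sub (hasDerivAt_sum_range_neg_pow_div_factorial n s)).congr_deriv
        (by ring)
    have hB : ∀ s, HasDerivAt (fun s : ℝ => s ^ (n + 1) / (n + 1).factorial)
        (s ^ n / n.factorial) s := fun s =>
      ((hasDerivAt_pow (n + 1) s).div_const _).congr_deriv (by
        rw [Nat.factorial_succ, Nat.cast_mul]; field_simp; push_cast; ring)
    refine image_norm_le_of_norm_deriv_right_le_deriv_boundary (a := 0) (b := t)
      (fun s _ => (hf s).continuousAt.continuousWithinAt) (fun s _ => (hf s).hasDerivWithinAt)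
      (by simp [sum_range_succ']) hB (fun s hs => ?_) ⟨ht, le_rfl⟩
    rw [norm_neg]
    exact ih hs.1

lemma integrable_pow_mul_exp_neg_mul_sq {b : ℝ} (hb : 0 < b) (n : ℕ) :
    Integrable fun x : ℝ => x ^ n * exp (-b * x ^ 2) := by
  simpa [rpow_natCast] using
    integrable_rpow_mul_exp_neg_mul_sq hb (s := n) (by linarith [n.cast_nonneg (α := ℝ)])

-- Integration by parts against `d/dx (x ^ (j + 1) * exp (-b * x ^ 2))`, which integrates to `0`.
lemma integral_pow_add_two_mul_exp_neg_mul_sq {b : ℝ} (hb : 0 < b) (j : ℕ) :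
    ∫ x : ℝ, x ^ (j + 2) * exp (-b * x ^ 2)
      = (j + 1) / (2 * b) * ∫ x : ℝ, x ^ j * exp (-b * x ^ 2) := by
  have hderiv : ∀ x : ℝ, HasDerivAt (fun x => x ^ (j + 1) * exp (-b * x ^ 2))
      ((j + 1) * (x ^ j * exp (-b * x ^ 2)) - 2 * b * (x ^ (j + 2) * exp (-b * x ^ 2))) x := by
    intro x
    refine ((hasDerivAt_pow (j + 1) x).mul
      (((hasDerivAt_pow 2 x).const_mul (-b)).exp)).congr_deriv ?_
    push_cast
    ring
  have hint := integrable_pow_mul_exp_neg_mul_sq hb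
  have hzero := integral_eq_zero_of_hasDerivAt_of_integrable hderiv
    (((hint j).const_mul _).sub ((hint (j + 2)).const_mul _)) (hint (j + 1))
  rw [integral_sub ((hint j).const_mul _) ((hint (j + 2)).const_mul _),
    integral_const_mul, integral_const_mul, sub_eq_zero] at hzero
  rw [div_mul_eq_mul_div, eq_div_iff (by positivity)]
  linarith

lemma integral_pow_two_mul_mul_exp_neg_mul_sq {b : ℝ} (hb : 0 < b) (m : ℕ) :
    ∫ x : ℝ, x ^ (2 * m) * exp (-b * x ^ 2)
      = ((2 * m - 1)‼ : ℝ) / (2 * b) ^ m * √(π / b) := by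
  induction m with
  | zero => simpa using integral_gaussian b
  | succ m ih =>
    rw [show 2 * (m + 1) = 2 * m + 2 by ring, integral_pow_add_two_mul_exp_neg_mul_sq hb, ih,
      show 2 * m + 2 - 1 = 2 * m + 1 by omega, Nat.doubleFactorial_add_one]
    push_cast
    field_simp
    ring

lemma pG_eq (σ x : ℝ) : pG σ x = (√(2 * π) * σ)⁻¹ * exp (-(2 * σ ^ 2)⁻¹ * x ^ 2) := by
  rw [pG, one_div, neg_div, neg_mul, div_eq_inv_mul]

lemma pG_nonneg {σ : ℝ} (hσ : 0 < σ) (x : ℝ) : 0 ≤ pG σ x := by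
  unfold pG
  positivity

lemma integrable_pG_mul_pow {σ : ℝ} (hσ : 0 < σ) (j : ℕ) :
    Integrable fun x : ℝ => pG σ x * x ^ j := by
  simp_rw [pG_eq, mul_assoc, mul_comm (exp _)]
  exact ((integrable_pow_mul_exp_neg_mul_sq (by positivity) j).const_mul _)

lemma integral_pG_mul_pow_of_even {σ : ℝ} (hσ : 0 < σ) {j : ℕ} (hj : Even j) :
    ∫ x : ℝ, pG σ x * x ^ j = ((j - 1)‼ : ℝ) * σ ^ j := by
  obtain ⟨m, rfl⟩ := hj
  simp_rw [pG_eq, mul_assoc, mul_comm (exp _), integral_const_mul, ← two_mul,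
    integral_pow_two_mul_mul_exp_neg_mul_sq (by positivity : 0 < (2 * σ ^ 2)⁻¹)]
  have hsqrt : √(π * (2 * σ ^ 2)) = √(2 * π) * σ := by
    rw [show π * (2 * σ ^ 2) = 2 * π * σ ^ 2 by ring, sqrt_mul (by positivity), sqrt_sq hσ.le]
  rw [div_inv_eq_mul, hsqrt, pow_mul, show 2 * (2 * σ ^ 2)⁻¹ = (σ ^ 2)⁻¹ by field_simp,
    inv_pow, div_inv_eq_mul]
  field_simp

theorem abs_integral_mul_pow_mul_exp_neg_mul_pow_sub_sum_le {w : ℝ → ℝ} (hw : ∀ x, 0 ≤ w x)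
    (hint : ∀ j : ℕ, Integrable fun x => w x * x ^ j) {p k : ℕ} (hp : Even p) (hk : Even k)
    (N : ℕ) {ε : ℝ} (hε : 0 ≤ ε) :
    |(∫ x, w x * x ^ k * exp (-ε * x ^ p)) -
        ∑ n ∈ range (N + 1), (-ε) ^ n / n.factorial * ∫ x, w x * x ^ (n * p + k)|
      ≤ ε ^ (N + 1) / (N + 1).factorial * ∫ x, w x * x ^ ((N + 1) * p + k) := by
  set S : ℝ → ℝ := fun t => ∑ n ∈ range (N + 1), (-t) ^ n / n.factorial
  have hpow : ∀ (x : ℝ) (n : ℕ), x ^ (n * p + k) = (x ^ p) ^ n * x ^ k := fun x n => by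
    rw [pow_add, mul_comm n p, pow_mul]
  have hwk : ∀ x, 0 ≤ w x * x ^ k := fun x => mul_nonneg (hw x) (hk.pow_nonneg x)
  have htaylor : ∀ x, w x * x ^ k * S (ε * x ^ p)
      = ∑ n ∈ range (N + 1), (-ε) ^ n / n.factorial * (w x * x ^ (n * p + k)) := fun x => by
    simp only [S, mul_sum, hpow, neg_mul_eq_neg_mul, mul_pow]
    exact sum_congr rfl fun n _ => by ring
  have hintS : Integrable fun x => w x * x ^ k * S (ε * x ^ p) := by
    simp only [htaylor]
    exact integrable_finsetSum _ fun n _ => (hint _).const_mul _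
  have hintE : Integrable fun x => w x * x ^ k * exp (-ε * x ^ p) :=
    (hint k).mul_bdd (c := 1) (by fun_prop) (Eventually.of_forall fun x => by
      rw [norm_of_nonneg (exp_pos _).le, exp_le_one_iff]
      nlinarith [hp.pow_nonneg x])
  have hbound : ∀ x, ‖w x * x ^ k * exp (-ε * x ^ p) - w x * x ^ k * S (ε * x ^ p)‖
      ≤ ε ^ (N + 1) / (N + 1).factorial * (w x * x ^ ((N + 1) * p + k)) := fun x => by
    rw [← mul_sub, norm_mul, norm_of_nonneg (hwk x), norm_eq_abs, neg_mul, hpow]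
    calc w x * x ^ k * |exp (-(ε * x ^ p)) - S (ε * x ^ p)|
        ≤ w x * x ^ k * ((ε * x ^ p) ^ (N + 1) / (N + 1).factorial) :=
          mul_le_mul_of_nonneg_left
            (abs_exp_neg_sub_sum_range_le _ (mul_nonneg hε (hp.pow_nonneg x))) (hwk x)
      _ = _ := by ring
  rw [← norm_eq_abs]
  simp only [← integral_const_mul]
  rw [← integral_finsetSum _ fun n _ => (hint _).const_mul _]
  simp only [← htaylor]
  rw [← integral_sub hintE hintS]
  exact norm_integral_le_of_norm_le ((hint _).const_mul _) (Eventually.of_forall hbound)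

theorem stmt4_general (σ : ℝ) (hσ : 0 < σ) (p : ℕ) (hpe : Even p)
    (k : ℕ) (hk : Even k) (N : ℕ) :
    (fun ε : ℝ =>
        (∫ x : ℝ, pG σ x * x ^ k * Real.exp (-ε * x ^ p)) -
          ∑ n ∈ Finset.range (N + 1),
            (-ε) ^ n / (n.factorial : ℝ) *
              (Nat.doubleFactorial (n * p + k - 1) : ℝ) * σ ^ (n * p + k))
      =O[𝓝[>] (0 : ℝ)] fun ε => ε ^ (N + 1) := by
  have hmoment : ∀ n : ℕ,
      ∫ x, pG σ x * x ^ (n * p + k) = ((n * p + k - 1)‼ : ℝ) * σ ^ (n * p + k) :=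
    fun n => integral_pG_mul_pow_of_even hσ ((hpe.mul_left n).add hk)
  refine isBigO_iff.mpr ⟨((N + 1) * p + k - 1)‼ * σ ^ ((N + 1) * p + k) / (N + 1).factorial, ?_⟩
  filter_upwards [self_mem_nhdsWithin] with ε (hε : 0 < ε)
  have h := abs_integral_mul_pow_mul_exp_neg_mul_pow_sub_sum_le (pG_nonneg hσ)
    (integrable_pG_mul_pow hσ) hpe hk N hε.le
  simp only [hmoment, ← mul_assoc] at h
  rw [norm_eq_abs, norm_of_nonneg (by positivity)]
  exact h.trans_eq (by ring)

theorem stmt4 (σ : ℝ) (hσ : 0 < σ) (p : ℕ) (hp : 0 < p) (hpe : Even p)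
    (k : ℕ) (hk : Even k) (N : ℕ) :
    (fun ε : ℝ =>
        (∫ x : ℝ, pG σ x * x ^ k * Real.exp (-ε * x ^ p)) -
          ∑ n ∈ Finset.range (N + 1),
            (-ε) ^ n / (n.factorial : ℝ) *
              (Nat.doubleFactorial (n * p + k - 1) : ℝ) * σ ^ (n * p + k))
      =O[𝓝[>] (0 : ℝ)] fun ε => ε ^ (N + 1) :=
  stmt4_general σ hσ p hpe k hk N
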